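/- arXiv:2103.04583 — 5 statements merged into one kernel-verified Lean document; each statement's English description precedes it below -/
import Mathlib

section
/- With the notation of the previous decomposition, for each j ∈ {1,...,n−1}, Σ_{i=0}^{n-1} W_i W_{i+j}ᵀ = (λ/n)(J_v − I_v), where indices are taken modulo n. -/
/-!
Since the `W i` are `(0,1)`-matrices with disjoint supports, the `(x, y)` entry of
`∑ i, W i * (W (i + j))ᵀ` counts the columns `c` in which `W x c = w^i` and `W y c = w^(i+j)`
for some `i`. For `x = y` there are none as `j ≠ 0`, and for `x ≠ y` this is the balance
condition with `t = -j`.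
-/

open Matrix Finset

theorem Finset.sum_mul_eq_ite_of_zero_one {ι R : Type*} [Fintype ι] [Semiring R] [DecidableEq R]
    (f g : ι → R) (hf : ∀ i, f i = 0 ∨ f i = 1) (hg : ∀ i, g i = 0 ∨ g i = 1)
    (hf_unique : ∀ i i', f i = 1 → f i' = 1 → i = i') :
    ∑ i, f i * g i = if ∃ i, f i = 1 ∧ g i = 1 then 1 else 0 := by
  split_ifs with hex
  · obtain ⟨i₀, hf₀, hg₀⟩ := hex
    rw [Finset.sum_eq_single i₀ (fun i _ hi => ?_) (by simp), hf₀, hg₀, one_mul]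
    rcases hf i with h | h
    · rw [h, zero_mul]
    · exact absurd (hf_unique i i₀ h hf₀) hi
  · refine Finset.sum_eq_zero fun i _ => ?_
    rcases hf i with h | h
    · rw [h, zero_mul]
    rcases hg i with h' | h'
    · rw [h', mul_zero]
    · exact absurd ⟨i, h, h'⟩ hex

theorem Matrix.sum_mul_transpose_add_apply_of_zero_one {G m p R : Type*}
    [AddGroup G] [Fintype G] [Fintype p] [Semiring R] [DecidableEq R]
    (W : G → Matrix m p R) (h01 : ∀ i x c, W i x c = 0 ∨ W i x c = 1)
    (hdisj : ∀ x c i i', W i x c = 1 → W i' x c = 1 → i = i') (j : G) (x y : m) :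
    (∑ i, W i * (W (i + j))ᵀ) x y
      = #{c | ∃ i, W i x c = 1 ∧ W (i + j) y c = 1} := by
  simp only [Matrix.sum_apply, Matrix.mul_apply, Matrix.transpose_apply]
  rw [Finset.sum_comm, Finset.natCast_card_filter]
  refine Finset.sum_congr rfl fun c _ => ?_
  exact Finset.sum_mul_eq_ite_of_zero_one _ _ (h01 · x c) (fun i => h01 (i + j) y c) (hdisj x c)

theorem bgw_decomposition_shifted_index_general (n : ℕ) [NeZero n] (v lam : ℕ)
    (W : ZMod n → Matrix (Fin v) (Fin v) ℚ)
    (h01 : ∀ i x y, W i x y = 0 ∨ W i x y = 1)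
    (hdisj : ∀ x y, ∀ i j : ZMod n, i ≠ j → W i x y = 1 → W j x y ≠ 1)
    (hbal : ∀ x y : Fin v, x ≠ y → ∀ t : ZMod n,
      ((Finset.univ.filter fun c =>
          ∃ i : ZMod n, W i x c = 1 ∧ W (i - t) y c = 1).card : ℚ) = (lam : ℚ) / n) :
    ∀ j : ZMod n, j ≠ 0 →
      ∑ i : ZMod n, W i * (W (i + j))ᵀ
        = ((lam : ℚ) / n) • ((Matrix.of fun _ _ => (1 : ℚ)) - 1) := by
  intro j hj
  ext x y
  rw [Matrix.sum_mul_transpose_add_apply_of_zero_one W h01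
    (fun x c i i' hi hi' => by_contra fun hne => hdisj x c i i' hne hi hi')]
  by_cases hxy : x = y
  · subst hxy
    have hempty : ∀ c i, ¬(W i x c = 1 ∧ W (i + j) x c = 1) := fun c i ⟨hi, hij⟩ =>
      hdisj x c i (i + j) (by simpa using hj) hi hij
    simp [hempty]
  · simpa [hxy] using hbal x y hxy (-j)

/-- If `W = ∑ i, w^i • W i` is a balanced generalized weighing matrix
`BGW(v,k,λ)` over the cyclic group of `n`-th roots of unity, then for each
`j ≠ 0`, `∑ i, W i * (W (i+j))ᵀ = (λ/n)(J - I)`. -/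
theorem bgw_decomposition_shifted_index (n : ℕ) [NeZero n] (v k lam : ℕ)
    (W : ZMod n → Matrix (Fin v) (Fin v) ℚ)
    (h01 : ∀ i x y, W i x y = 0 ∨ W i x y = 1)
    (hdisj : ∀ x y, ∀ i j : ZMod n, i ≠ j → W i x y = 1 → W j x y ≠ 1)
    (hrow : ∀ x : Fin v,
      (Finset.univ.filter fun c => ∃ i : ZMod n, W i x c = 1).card = k)
    (hbal : ∀ x y : Fin v, x ≠ y → ∀ t : ZMod n,
      ((Finset.univ.filter fun c =>
          ∃ i : ZMod n, W i x c = 1 ∧ W (i - t) y c = 1).card : ℚ) = (lam : ℚ) / n) :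
    ∀ j : ZMod n, j ≠ 0 →
      ∑ i : ZMod n, W i * (W (i + j))ᵀ
        = ((lam : ℚ) / n) • ((Matrix.of fun _ _ => (1 : ℚ)) - 1) :=
  bgw_decomposition_shifted_index_general n v lam W h01 hdisj hbal
end

section
/- Under the same hypotheses, Σ_{i≠j, 1≤i,j≤q} A_i A_jᵀ = q^{n−1}(J − I), where J and I are the q^n × q^n all-ones and identity matrices. -/
/-!
Expanding `(∑ i, A i) * (∑ j, A j)ᵀ` and removing the diagonal terms `i = j` gives
`∑_{i ≠ j} A i * (A j)ᵀ = cc • J - ∑ i, A i * (A i)ᵀ`. Since each entry of the array lies in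
exactly one `A i`, the `(x, y)` entry of `∑ i, A i * (A i)ᵀ` counts the columns in which rows
`x` and `y` agree: `cc` on the diagonal and `d` off it. Finally
`cc - d = (q ^ n - q ^ (n - 1)) / (q - 1) = q ^ (n - 1)`.
-/

open Matrix Finset

theorem Matrix.sum_sum_erase_mul_transpose {ι m k R : Type*} [Fintype ι] [DecidableEq ι]
    [Fintype k] [Ring R] (A : ι → Matrix m k R) :
    ∑ i, ∑ j ∈ univ.erase i, A i * (A j)ᵀ
      = (∑ i, A i) * (∑ i, A i)ᵀ - ∑ i, A i * (A i)ᵀ := by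
  simp only [sum_erase_eq_sub (mem_univ _), sum_sub_distrib, transpose_sum, Matrix.sum_mul,
    Matrix.mul_sum]
  rw [sum_comm]

theorem Matrix.ones_mul_ones_transpose {m k R : Type*} [Fintype k] [Semiring R] :
    (of fun _ _ => 1 : Matrix m k R) * (of fun _ _ => 1 : Matrix m k R)ᵀ
      = (Fintype.card k : R) • (of fun _ _ => 1 : Matrix m m R) := by
  ext
  simp [mul_apply]

section IsOneHot

variable {ι m k R : Type*} [DecidableEq ι] {A : ι → Matrix m k R}

/-- The paper's decomposition of an array into disjoint (0,1)-matrices summing to `J`. -/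
def IsOneHot [Zero R] [One R] (A : ι → Matrix m k R) : Prop :=
  ∀ x c, ∃ i₀, ∀ i, A i x c = if i = i₀ then 1 else 0

theorem IsOneHot.of_existsUnique [Zero R] [One R] (h01 : ∀ i x c, A i x c = 0 ∨ A i x c = 1)
    (h1 : ∀ x c, ∃! i, A i x c = 1) : IsOneHot A := by
  intro x c
  obtain ⟨i₀, hi₀, huniq⟩ := h1 x c
  refine ⟨i₀, fun i => ?_⟩
  split_ifs with h
  · rwa [h]
  · exact (h01 i x c).resolve_right (mt (huniq i) h)

variable [Fintype ι]

theorem IsOneHot.sum_eq_ones [AddCommMonoidWithOne R] (hA : IsOneHot A) :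
    ∑ i, A i = (of fun _ _ => 1 : Matrix m k R) := by
  ext x c
  obtain ⟨i₀, hi₀⟩ := hA x c
  simp [Matrix.sum_apply, hi₀]

theorem IsOneHot.sum_mul_transpose_self_apply [Fintype k] [Semiring R] [Nontrivial R]
    [DecidableEq R] (hA : IsOneHot A) (x y : m) :
    (∑ i, A i * (A i)ᵀ) x y = #{c | ∃ i, A i x c = 1 ∧ A i y c = 1} := by
  simp only [Matrix.sum_apply, mul_apply, transpose_apply]
  rw [sum_comm, ← sum_boole]
  refine sum_congr rfl fun c _ => ?_
  obtain ⟨i₀, hi₀⟩ := hA x c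
  obtain ⟨j₀, hj₀⟩ := hA y c
  simp [hi₀, hj₀, eq_comm]

theorem IsOneHot.sum_mul_transpose_self_apply_self [Fintype k] [Semiring R] [Nontrivial R]
    (hA : IsOneHot A) (x : m) :
    (∑ i, A i * (A i)ᵀ) x x = Fintype.card k := by
  classical
  rw [hA.sum_mul_transpose_self_apply, filter_true_of_mem, card_univ]
  intro c _
  obtain ⟨i₀, hi₀⟩ := hA x c
  exact ⟨i₀, by simp [hi₀]⟩

end IsOneHot

theorem sub_eq_pow_of_mul_eq_pow_sub_one {q n cc d : ℕ} (hq : 1 < q) (hn : n ≠ 0)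
    (hcc : (q - 1) * cc = q ^ n - 1) (hd : (q - 1) * d = q ^ (n - 1) - 1) :
    (cc : ℤ) - d = (q : ℤ) ^ (n - 1) := by
  have hpow : q ^ n = q * q ^ (n - 1) := by rw [← pow_succ', Nat.sub_add_cancel (by omega)]
  have hqn : 1 ≤ q ^ (n - 1) := Nat.one_le_pow _ _ (by omega)
  have hqn' : 1 ≤ q * q ^ (n - 1) := Nat.mul_pos (by omega) hqn
  rw [hpow] at hcc
  zify [hq.le, hqn, hqn'] at hcc hd
  have hq1 : (q : ℤ) - 1 ≠ 0 := sub_ne_zero.mpr (by exact_mod_cast hq.ne')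
  apply mul_left_cancel₀ hq1
  linear_combination hcc - hd

theorem oa_sum_distinct_indices_general (q n cc d : ℕ) (hq : 2 ≤ q)
    (hcc : (q - 1) * cc = q ^ n - 1) (hd : (q - 1) * d = q ^ (n - 1) - 1)
    (A : Fin q → Matrix (Fin (q ^ n)) (Fin cc) ℤ)
    (h01 : ∀ i x y, A i x y = 0 ∨ A i x y = 1)
    (hcell : ∀ x y, ∃! i, A i x y = 1)
    (hagree : ∀ x y : Fin (q ^ n), x ≠ y →
      (Finset.univ.filter fun c => ∃ i, A i x c = 1 ∧ A i y c = 1).card = d) :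
    ∑ i, ∑ j ∈ Finset.univ.erase i, A i * (A j)ᵀ
      = ((q : ℤ) ^ (n - 1)) • ((Matrix.of fun _ _ => (1 : ℤ)) - 1) := by
  have hA : IsOneHot A := .of_existsUnique h01 hcell
  rw [Matrix.sum_sum_erase_mul_transpose, hA.sum_eq_ones, Matrix.ones_mul_ones_transpose]
  refine Matrix.ext fun x y ↦ ?_
  rw [Matrix.sub_apply]
  by_cases hxy : x = y
  · subst hxy
    simp [hA.sum_mul_transpose_self_apply_self]
  · have hn : n ≠ 0 := by
      rintro rfl
      exact hxy (Subsingleton.elim (α := Fin 1) x y)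
    have hoff : (∑ i, A i * (A i)ᵀ) x y = d := by
      rw [hA.sum_mul_transpose_self_apply, ← hagree x y hxy]
      -- the two filters differ only in their decidability instances
      congr
    simp [hoff, hxy, sub_eq_pow_of_mul_eq_pow_sub_one hq hn hcc hd]

/-- Under the same orthogonal-array hypotheses,
`∑_{i ≠ j} A i * (A j)ᵀ = q^(n-1) (J - I)`. -/
theorem oa_sum_distinct_indices (q n cc d : ℕ) (hq : 2 ≤ q) (hn : 2 ≤ n)
    (hcc : (q - 1) * cc = q ^ n - 1) (hd : (q - 1) * d = q ^ (n - 1) - 1)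
    (A : Fin q → Matrix (Fin (q ^ n)) (Fin cc) ℤ)
    (h01 : ∀ i x y, A i x y = 0 ∨ A i x y = 1)
    (hcell : ∀ x y, ∃! i, A i x y = 1)
    (hOA : ∀ c1 c2 : Fin cc, c1 ≠ c2 → ∀ s t : Fin q,
      (Finset.univ.filter fun x => A s x c1 = 1 ∧ A t x c2 = 1).card = q ^ (n - 2))
    (hagree : ∀ x y : Fin (q ^ n), x ≠ y →
      (Finset.univ.filter fun c => ∃ i, A i x c = 1 ∧ A i y c = 1).card = d) :
    ∑ i, ∑ j ∈ Finset.univ.erase i, A i * (A j)ᵀ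
      = ((q : ℤ) ^ (n - 1)) • ((Matrix.of fun _ _ => (1 : ℤ)) - 1) :=
  oa_sum_distinct_indices_general q n cc d hq hcc hd A h01 hcell hagree
end

section
/- Let A_1,...,A_9 be N×c disjoint (0,1)-matrices with Σ_i A_i A_iᵀ = a J_N + b I_N and Σ_{i≠j} A_i A_jᵀ = e (J_N − I_N), and let r_1,...,r_9 be row vectors (rows of a matrix Y) of length 18 with r_i r_iᵀ = 8 and r_i r_jᵀ = −1 for i ≠ j. Then D := Σ_{i=1}^9 A_i ⊗ r_i satisfies D Dᵀ = (8b + e) I_N + (8a − e) J_N. -/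
/-!
By the mixed-product rule `(A ⊗ r)(B ⊗ s)ᵀ = ABᵀ ⊗ rsᵀ`, the product `D Dᵀ` is the sum of the
blocks `AᵢAⱼᵀ ⊗ rᵢrⱼᵀ`. Each `rᵢrⱼᵀ` is the scalar `8` or `-1`, so
`D Dᵀ = 8 ∑ᵢ AᵢAᵢᵀ - ∑_{i ≠ j} AᵢAⱼᵀ = 8(aJ + bI) - e(J - I)`.
-/

open Matrix Kronecker Finset

namespace Matrix

variable {ι l m n p q R : Type*} [CommRing R]

theorem sum_kronecker (s : Finset ι) (A : ι → Matrix l m R) (B : Matrix n p R) :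
    (∑ i ∈ s, A i) ⊗ₖ B = ∑ i ∈ s, A i ⊗ₖ B :=
  map_sum ((kroneckerBilinear (R := R)).flip B) A s

theorem sum_kronecker_mul_transpose_sum [Fintype ι] [Fintype m] [Fintype q]
    (A : ι → Matrix l m R) (r : ι → Matrix n q R) :
    (∑ i, A i ⊗ₖ r i) * (∑ i, A i ⊗ₖ r i)ᵀ
      = ∑ i, ∑ j, (A i * (A j)ᵀ) ⊗ₖ (r i * (r j)ᵀ) := by
  rw [transpose_sum, Matrix.sum_mul]
  simp only [Matrix.mul_sum, kroneckerMap_transpose, mul_kronecker_mul]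

theorem sum_sum_kronecker_of_eq_ite [Fintype ι] [DecidableEq ι] [DecidableEq n]
    (M : ι → ι → Matrix l m R) (G : ι → ι → Matrix n n R) (α β : R)
    (hG : ∀ i j, G i j = if i = j then α • (1 : Matrix n n R) else β • 1) :
    ∑ i, ∑ j, M i j ⊗ₖ G i j
      = (α • ∑ i, M i i + β • ∑ i, ∑ j ∈ univ.erase i, M i j) ⊗ₖ (1 : Matrix n n R) := by
  have row : ∀ i, ∑ j, M i j ⊗ₖ G i j
      = α • (M i i ⊗ₖ 1) + β • ∑ j ∈ univ.erase i, M i j ⊗ₖ (1 : Matrix n n R) := by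
    intro i
    rw [← add_sum_erase _ _ (mem_univ i), hG, if_pos rfl, kronecker_smul, smul_sum]
    congr 1
    refine sum_congr rfl fun j hj => ?_
    rw [hG, if_neg (ne_of_mem_erase hj).symm, kronecker_smul]
  simp only [row, sum_add_distrib, add_kronecker, smul_kronecker, ← smul_sum, sum_kronecker]

theorem of_one_kronecker_one [DecidableEq n] [Subsingleton n] :
    (of fun (_ : l) (_ : m) => (1 : R)) ⊗ₖ (1 : Matrix n n R) = of fun _ _ => 1 := by
  ext ⟨x, u⟩ ⟨y, v⟩
  simp [Subsingleton.elim u v]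

end Matrix

theorem kronecker_oa_construction_general (N c : ℕ) (a b e : ℚ)
    (A : Fin 9 → Matrix (Fin N) (Fin c) ℚ)
    (hAA : ∑ i, A i * (A i)ᵀ
      = a • (Matrix.of fun _ _ => (1 : ℚ)) + b • (1 : Matrix (Fin N) (Fin N) ℚ))
    (hAB : ∑ i, ∑ j ∈ Finset.univ.erase i, A i * (A j)ᵀ
      = e • ((Matrix.of fun _ _ => (1 : ℚ)) - (1 : Matrix (Fin N) (Fin N) ℚ)))
    (r : Fin 9 → Matrix (Fin 1) (Fin 18) ℚ)
    (hr : ∀ i j, r i * (r j)ᵀ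
      = if i = j then (8 : ℚ) • (1 : Matrix (Fin 1) (Fin 1) ℚ)
        else (-1 : ℚ) • (1 : Matrix (Fin 1) (Fin 1) ℚ)) :
    (∑ i, A i ⊗ₖ r i) * (∑ i, A i ⊗ₖ r i)ᵀ
      = (8 * b + e) • (1 : Matrix (Fin N × Fin 1) (Fin N × Fin 1) ℚ)
        + (8 * a - e) • (Matrix.of fun _ _ => (1 : ℚ)) := by
  have hcombine : (8 : ℚ) • (a • of (fun _ _ => (1 : ℚ)) + b • (1 : Matrix (Fin N) (Fin N) ℚ))
      + (-1 : ℚ) • e • (of (fun _ _ => (1 : ℚ)) - 1)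
      = (8 * b + e) • 1 + (8 * a - e) • of fun _ _ => 1 := by
    module
  rw [sum_kronecker_mul_transpose_sum, sum_sum_kronecker_of_eq_ite _ _ _ _ hr, hAA, hAB, hcombine,
    add_kronecker, smul_kronecker, smul_kronecker, one_kronecker_one, of_one_kronecker_one]

/-- If `A₁,…,A₉` are disjoint `(0,1)`-matrices with
`∑ Aᵢ Aᵢᵀ = a J + b I` and `∑_{i≠j} Aᵢ Aⱼᵀ = e (J − I)`, and the row vectors
`r₁,…,r₉` satisfy `rᵢ rᵢᵀ = 8`, `rᵢ rⱼᵀ = −1 (i ≠ j)`, then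
`D = ∑ Aᵢ ⊗ rᵢ` satisfies `D Dᵀ = (8b+e) I + (8a−e) J`. -/
theorem kronecker_oa_construction (N c : ℕ) (a b e : ℚ)
    (A : Fin 9 → Matrix (Fin N) (Fin c) ℚ)
    (h01 : ∀ i x y, A i x y = 0 ∨ A i x y = 1)
    (hdisj : ∀ x y, ∀ i j : Fin 9, i ≠ j → A i x y = 1 → A j x y ≠ 1)
    (hAA : ∑ i, A i * (A i)ᵀ
      = a • (Matrix.of fun _ _ => (1 : ℚ)) + b • (1 : Matrix (Fin N) (Fin N) ℚ))
    (hAB : ∑ i, ∑ j ∈ Finset.univ.erase i, A i * (A j)ᵀ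
      = e • ((Matrix.of fun _ _ => (1 : ℚ)) - (1 : Matrix (Fin N) (Fin N) ℚ)))
    (r : Fin 9 → Matrix (Fin 1) (Fin 18) ℚ)
    (hr : ∀ i j, r i * (r j)ᵀ
      = if i = j then (8 : ℚ) • (1 : Matrix (Fin 1) (Fin 1) ℚ)
        else (-1 : ℚ) • (1 : Matrix (Fin 1) (Fin 1) ℚ)) :
    (∑ i, A i ⊗ₖ r i) * (∑ i, A i ⊗ₖ r i)ᵀ
      = (8 * b + e) • (1 : Matrix (Fin N × Fin 1) (Fin N × Fin 1) ℚ)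
        + (8 * a - e) • (Matrix.of fun _ _ => (1 : ℚ)) :=
  kronecker_oa_construction_general N c a b e A hAA hAB r hr
end

section
/- Let W = W_1 − W_2 be a balanced weighing matrix with parameters (v,k,λ) with v > k as above, and define the six 4v×4v matrices A_0,...,A_5 as in the paper (using P = [[0,1],[1,0]]). Then A_0 = I, Σ_{i=0}^5 A_i = J_{4v}, each A_i is symmetric, and A_3² = k A_0 + (k(k−1)/(2(v−1))) A_2. -/
/-!
Write `B = 1 ⊗ W₁ + P ⊗ W₂`, so that `A₃ = [[0, B], [Bᵀ, 0]]` and `A₃² = diag(BBᵀ, BᵀB)`.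
Since `P² = 1`, `BBᵀ = 1 ⊗ (W₁W₁ᵀ + W₂W₂ᵀ) + P ⊗ (W₁W₂ᵀ + W₂W₁ᵀ)`, and the two coefficients are half
the sum and half the difference of `(W₁ + W₂)(W₁ + W₂)ᵀ = (k − λ)I + λJ` and
`(W₁ − W₂)(W₁ − W₂)ᵀ = kI`; with `J₂ = 1 + P` this is `kI + (λ/2) J₂ ⊗ (J − I)`, and `BᵀB` is
the same computation for the transposes. The other relations are Kronecker bookkeeping.
-/

open Matrix Kronecker

namespace BGWScheme

def P : Matrix (Fin 2) (Fin 2) ℚ := !![0, 1; 1, 0]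

def J2 : Matrix (Fin 2) (Fin 2) ℚ := Matrix.of fun _ _ => 1

def Jv (v : ℕ) : Matrix (Fin v) (Fin v) ℚ := Matrix.of fun _ _ => 1

/-- Index set for the `4v × 4v` matrices of the scheme. -/
abbrev Idx (v : ℕ) := (Fin 2 × Fin v) ⊕ (Fin 2 × Fin v)

def A0 (v : ℕ) : Matrix (Idx v) (Idx v) ℚ := 1

def A1 (v : ℕ) : Matrix (Idx v) (Idx v) ℚ :=
  Matrix.fromBlocks (P ⊗ₖ (1 : Matrix (Fin v) (Fin v) ℚ)) 0 0
    (P ⊗ₖ (1 : Matrix (Fin v) (Fin v) ℚ))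

def A2 (v : ℕ) : Matrix (Idx v) (Idx v) ℚ :=
  Matrix.fromBlocks (J2 ⊗ₖ (Jv v - 1)) 0 0 (J2 ⊗ₖ (Jv v - 1))

def A3 (v : ℕ) (W1 W2 : Matrix (Fin v) (Fin v) ℚ) : Matrix (Idx v) (Idx v) ℚ :=
  Matrix.fromBlocks 0 ((1 : Matrix (Fin 2) (Fin 2) ℚ) ⊗ₖ W1 + P ⊗ₖ W2)
    ((1 : Matrix (Fin 2) (Fin 2) ℚ) ⊗ₖ W1ᵀ + P ⊗ₖ W2ᵀ) 0

def A4 (v : ℕ) (W1 W2 : Matrix (Fin v) (Fin v) ℚ) : Matrix (Idx v) (Idx v) ℚ :=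
  Matrix.fromBlocks 0 ((1 : Matrix (Fin 2) (Fin 2) ℚ) ⊗ₖ W2 + P ⊗ₖ W1)
    ((1 : Matrix (Fin 2) (Fin 2) ℚ) ⊗ₖ W2ᵀ + P ⊗ₖ W1ᵀ) 0

def A5 (v : ℕ) (W1 W2 : Matrix (Fin v) (Fin v) ℚ) : Matrix (Idx v) (Idx v) ℚ :=
  Matrix.fromBlocks 0 (J2 ⊗ₖ (Jv v - W1 - W2)) (J2 ⊗ₖ (Jv v - W1ᵀ - W2ᵀ)) 0

theorem _root_.Matrix.kronecker_sub {R l m n p : Type*} [Ring R] (A : Matrix l m R)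
    (B₁ B₂ : Matrix n p R) : A ⊗ₖ (B₁ - B₂) = A ⊗ₖ B₁ - A ⊗ₖ B₂ := by
  ext; simp [mul_sub]

theorem _root_.Matrix.fromBlocks_zero_mul_self {R m n : Type*} [Fintype m] [Fintype n]
    [NonUnitalNonAssocSemiring R] (B : Matrix m n R) (C : Matrix n m R) :
    fromBlocks 0 B C 0 * fromBlocks 0 B C 0 = fromBlocks (B * C) 0 0 (C * B) := by
  simp [fromBlocks_multiply]

theorem _root_.Matrix.one_kronecker_add_kronecker_mul {R m n p q : Type*} [CommRing R]
    [Fintype m] [DecidableEq m] [Fintype p] {Q : Matrix m m R} (hQ : Q * Q = 1)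
    (X Y : Matrix n p R) (X' Y' : Matrix p q R) :
    (1 ⊗ₖ X + Q ⊗ₖ Y) * (1 ⊗ₖ X' + Q ⊗ₖ Y')
      = 1 ⊗ₖ (X * X' + Y * Y') + Q ⊗ₖ (X * Y' + Y * X') := by
  simp only [Matrix.add_mul, Matrix.mul_add, ← mul_kronecker_mul, hQ, one_mul, mul_one,
    kronecker_add]
  abel

theorem _root_.Matrix.two_smul_mul_transpose_add_mul_transpose {R n p : Type*} [CommRing R]
    [Fintype p] (X Y : Matrix n p R) :
    (2 : R) • (X * Xᵀ + Y * Yᵀ) = (X + Y) * (X + Y)ᵀ + (X - Y) * (X - Y)ᵀ := by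
  simp only [transpose_add, transpose_sub, Matrix.add_mul, Matrix.mul_add, Matrix.sub_mul,
    Matrix.mul_sub, two_smul]
  abel

theorem _root_.Matrix.two_smul_mul_transpose_add_transpose_mul {R n p : Type*} [CommRing R]
    [Fintype p] (X Y : Matrix n p R) :
    (2 : R) • (X * Yᵀ + Y * Xᵀ) = (X + Y) * (X + Y)ᵀ - (X - Y) * (X - Y)ᵀ := by
  simp only [transpose_add, transpose_sub, Matrix.add_mul, Matrix.mul_add, Matrix.sub_mul,
    Matrix.mul_sub, two_smul]
  abel

theorem P_mul_P : P * P = 1 := by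
  ext i j; fin_cases i <;> fin_cases j <;> simp [P, Matrix.mul_apply, Fin.sum_univ_two]

theorem P_transpose : Pᵀ = P := by
  ext i j; fin_cases i <;> fin_cases j <;> simp [P]

theorem J2_eq_one_add_P : J2 = 1 + P := by
  ext i j; fin_cases i <;> fin_cases j <;> simp [J2, P]

theorem J2_transpose : J2ᵀ = J2 := rfl

theorem Jv_transpose (v : ℕ) : (Jv v)ᵀ = Jv v := rfl

theorem J2_kronecker_Jv (v : ℕ) : J2 ⊗ₖ Jv v = of fun _ _ => 1 := by
  ext; simp [J2, Jv]

theorem one_kronecker_add_P_kronecker_transpose {n p : Type*} (X Y : Matrix n p ℚ) :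
    (1 ⊗ₖ X + P ⊗ₖ Y)ᵀ = 1 ⊗ₖ Xᵀ + P ⊗ₖ Yᵀ := by
  simp only [transpose_add, ← kroneckerMap_transpose, transpose_one, P_transpose]

theorem one_kronecker_add_P_kronecker_mul_transpose {n : Type*} [Fintype n] [DecidableEq n]
    (W1 W2 J : Matrix n n ℚ) (k l : ℚ)
    (hW : (W1 - W2) * (W1 - W2)ᵀ = k • 1)
    (hN : (W1 + W2) * (W1 + W2)ᵀ = (k - l) • 1 + l • J) :
    (1 ⊗ₖ W1 + P ⊗ₖ W2) * (1 ⊗ₖ W1ᵀ + P ⊗ₖ W2ᵀ) = k • 1 + (l / 2) • (J2 ⊗ₖ (J - 1)) := by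
  rw [← smul_right_inj (two_ne_zero : (2 : ℚ) ≠ 0), one_kronecker_add_kronecker_mul P_mul_P,
    smul_add, ← kronecker_smul, ← kronecker_smul, two_smul_mul_transpose_add_mul_transpose,
    two_smul_mul_transpose_add_transpose_mul, hW, hN, J2_eq_one_add_P, ← one_kronecker_one]
  simp only [kronecker_add, kronecker_sub, add_kronecker, kronecker_smul]
  module

theorem offDiag_block_sum_eq_J2_kronecker_Jv {v : ℕ} (X Y : Matrix (Fin v) (Fin v) ℚ) :
    (1 ⊗ₖ X + P ⊗ₖ Y) + (1 ⊗ₖ Y + P ⊗ₖ X) + J2 ⊗ₖ (Jv v - X - Y) = J2 ⊗ₖ Jv v := by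
  have h : (1 ⊗ₖ X + P ⊗ₖ Y) + (1 ⊗ₖ Y + P ⊗ₖ X) = J2 ⊗ₖ (X + Y) := by
    rw [J2_eq_one_add_P, add_kronecker, kronecker_add, kronecker_add]
    abel
  rw [h, ← kronecker_add, sub_sub, add_sub_cancel]

theorem A_sum_eq_all_ones {v : ℕ} (W1 W2 : Matrix (Fin v) (Fin v) ℚ) :
    A0 v + A1 v + A2 v + A3 v W1 W2 + A4 v W1 W2 + A5 v W1 W2 = of fun _ _ => 1 := by
  have hdiag : 1 + P ⊗ₖ 1 + J2 ⊗ₖ (Jv v - 1) = J2 ⊗ₖ Jv v := by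
    rw [J2_eq_one_add_P, ← one_kronecker_one, ← add_kronecker, ← kronecker_add, add_sub_cancel]
  have hupper := offDiag_block_sum_eq_J2_kronecker_Jv W1 W2
  have hlower := offDiag_block_sum_eq_J2_kronecker_Jv W1ᵀ W2ᵀ
  simp only [A0, A1, A2, A3, A4, A5, ← fromBlocks_one, fromBlocks_add, add_zero, zero_add]
  rw [hdiag, hupper, hlower, J2_kronecker_Jv]
  ext (i | i) (j | j) <;> rfl

theorem A1_transpose (v : ℕ) : (A1 v)ᵀ = A1 v := by
  simp [A1, fromBlocks_transpose, ← kroneckerMap_transpose, P_transpose]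

theorem A2_transpose (v : ℕ) : (A2 v)ᵀ = A2 v := by
  simp only [A2, fromBlocks_transpose, ← kroneckerMap_transpose, transpose_sub, transpose_one,
    transpose_zero, J2_transpose, Jv_transpose]

theorem A3_transpose {v : ℕ} (W1 W2 : Matrix (Fin v) (Fin v) ℚ) : (A3 v W1 W2)ᵀ = A3 v W1 W2 := by
  simp only [A3, fromBlocks_transpose, one_kronecker_add_P_kronecker_transpose,
    transpose_transpose, transpose_zero]

theorem A4_transpose {v : ℕ} (W1 W2 : Matrix (Fin v) (Fin v) ℚ) : (A4 v W1 W2)ᵀ = A4 v W1 W2 := by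
  simp only [A4, fromBlocks_transpose, one_kronecker_add_P_kronecker_transpose,
    transpose_transpose, transpose_zero]

theorem A5_transpose {v : ℕ} (W1 W2 : Matrix (Fin v) (Fin v) ℚ) : (A5 v W1 W2)ᵀ = A5 v W1 W2 := by
  simp only [A5, fromBlocks_transpose, ← kroneckerMap_transpose, transpose_sub,
    transpose_transpose, transpose_zero, J2_transpose, Jv_transpose]

theorem A3_mul_self {v : ℕ} (W1 W2 : Matrix (Fin v) (Fin v) ℚ) (k l : ℚ)
    (hW : (W1 - W2) * (W1 - W2)ᵀ = k • 1) (hW' : (W1 - W2)ᵀ * (W1 - W2) = k • 1)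
    (hN : (W1 + W2) * (W1 + W2)ᵀ = (k - l) • 1 + l • Jv v)
    (hN' : (W1 + W2)ᵀ * (W1 + W2) = (k - l) • 1 + l • Jv v) :
    A3 v W1 W2 * A3 v W1 W2 = k • A0 v + (l / 2) • A2 v := by
  have hBBt := one_kronecker_add_P_kronecker_mul_transpose W1 W2 (Jv v) k l hW hN
  have hBtB := one_kronecker_add_P_kronecker_mul_transpose W1ᵀ W2ᵀ (Jv v) k l
    (by rwa [← transpose_sub, transpose_transpose]) (by rwa [← transpose_add, transpose_transpose])
  rw [transpose_transpose, transpose_transpose] at hBtB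
  rw [A3, fromBlocks_zero_mul_self, hBBt, hBtB, A0, A2, ← fromBlocks_one, fromBlocks_smul,
    fromBlocks_smul, fromBlocks_add]
  simp

theorem scheme_basic_relations_general (v : ℕ) (k : ℚ)
    (W1 W2 : Matrix (Fin v) (Fin v) ℚ)
    (hW : (W1 - W2) * (W1 - W2)ᵀ = k • (1 : Matrix (Fin v) (Fin v) ℚ))
    (hW' : (W1 - W2)ᵀ * (W1 - W2) = k • (1 : Matrix (Fin v) (Fin v) ℚ))
    (hN : (W1 + W2) * (W1 + W2)ᵀ
      = (k - k * (k - 1) / ((v : ℚ) - 1)) • (1 : Matrix (Fin v) (Fin v) ℚ)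
        + (k * (k - 1) / ((v : ℚ) - 1)) • Jv v)
    (hN' : (W1 + W2)ᵀ * (W1 + W2)
      = (k - k * (k - 1) / ((v : ℚ) - 1)) • (1 : Matrix (Fin v) (Fin v) ℚ)
        + (k * (k - 1) / ((v : ℚ) - 1)) • Jv v) :
    A0 v = 1 ∧
    A0 v + A1 v + A2 v + A3 v W1 W2 + A4 v W1 W2 + A5 v W1 W2
      = (Matrix.of fun _ _ => (1 : ℚ)) ∧
    ((A1 v)ᵀ = A1 v ∧ (A2 v)ᵀ = A2 v ∧ (A3 v W1 W2)ᵀ = A3 v W1 W2 ∧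
      (A4 v W1 W2)ᵀ = A4 v W1 W2 ∧ (A5 v W1 W2)ᵀ = A5 v W1 W2) ∧
    A3 v W1 W2 * A3 v W1 W2
      = k • A0 v + (k * (k - 1) / (2 * ((v : ℚ) - 1))) • A2 v := by
  refine ⟨rfl, A_sum_eq_all_ones W1 W2,
    ⟨A1_transpose v, A2_transpose v, A3_transpose W1 W2, A4_transpose W1 W2, A5_transpose W1 W2⟩,
    ?_⟩
  rw [mul_comm 2, ← div_div]
  exact A3_mul_self W1 W2 k _ hW hW' hN hN'

/-- For a balanced weighing matrix `W = W₁ − W₂` with parameters `(v,k,λ)`,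
`λ = k(k−1)/(v−1)`, `v > k`, the matrices `A₀,…,A₅` satisfy `A₀ = I`,
`∑ Aᵢ = J`, each `Aᵢ` is symmetric, and
`A₃² = k A₀ + (k(k−1)/(2(v−1))) A₂`. -/
theorem scheme_basic_relations (v : ℕ) (hv : 1 < v) (k : ℚ) (hvk : k < v)
    (W1 W2 : Matrix (Fin v) (Fin v) ℚ)
    (h01a : ∀ x y, W1 x y = 0 ∨ W1 x y = 1)
    (h01b : ∀ x y, W2 x y = 0 ∨ W2 x y = 1)
    (hdisj : ∀ x y, W1 x y = 1 → W2 x y ≠ 1)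
    (hW : (W1 - W2) * (W1 - W2)ᵀ = k • (1 : Matrix (Fin v) (Fin v) ℚ))
    (hW' : (W1 - W2)ᵀ * (W1 - W2) = k • (1 : Matrix (Fin v) (Fin v) ℚ))
    (hN : (W1 + W2) * (W1 + W2)ᵀ
      = (k - k * (k - 1) / ((v : ℚ) - 1)) • (1 : Matrix (Fin v) (Fin v) ℚ)
        + (k * (k - 1) / ((v : ℚ) - 1)) • Jv v)
    (hN' : (W1 + W2)ᵀ * (W1 + W2)
      = (k - k * (k - 1) / ((v : ℚ) - 1)) • (1 : Matrix (Fin v) (Fin v) ℚ)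
        + (k * (k - 1) / ((v : ℚ) - 1)) • Jv v) :
    A0 v = 1 ∧
    A0 v + A1 v + A2 v + A3 v W1 W2 + A4 v W1 W2 + A5 v W1 W2
      = (Matrix.of fun _ _ => (1 : ℚ)) ∧
    ((A1 v)ᵀ = A1 v ∧ (A2 v)ᵀ = A2 v ∧ (A3 v W1 W2)ᵀ = A3 v W1 W2 ∧
      (A4 v W1 W2)ᵀ = A4 v W1 W2 ∧ (A5 v W1 W2)ᵀ = A5 v W1 W2) ∧
    A3 v W1 W2 * A3 v W1 W2
      = k • A0 v + (k * (k - 1) / (2 * ((v : ℚ) - 1))) • A2 v :=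
  scheme_basic_relations_general v k W1 W2 hW hW' hN hN'

end BGWScheme
end

section
/- For any (0,1)-matrices N (v×v) with N Nᵀ = Nᵀ N = (k−λ) I_v + λ J_v, the four 2v×2v matrices B_0 = I_{2v}, B_1 = diag(J_v−I_v, J_v−I_v), B_2 = antidiag(N, Nᵀ), B_3 = antidiag(J_v−N, J_v−Nᵀ) form a symmetric association scheme: they are symmetric (0,1)-matrices summing to J_{2v} with B_0 = I, and all pairwise products lie in their linear span. -/
/-! The rational span of the `B h` consists of the block matrices
`[[a I + b J, c N + d J], [c Nᵀ + d J, a I + b J]]`, and the design equations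
`N Nᵀ = Nᵀ N = (k - λ) I + λ J`, `N J = J N = k J` make this space closed under multiplication.
Integrality of the structure constants is then automatic: the `B h` are `(0,1)`-matrices
partitioning `J`, so the coefficient of `B h` in an integer matrix is one of its entries. -/

open Matrix Finset

namespace SymDesignScheme

def Jv (v : ℕ) : Matrix (Fin v) (Fin v) ℚ := Matrix.of fun _ _ => 1

/-- The four `2v × 2v` block matrices built from the incidence matrix `N` of
a symmetric `(v,k,λ)`-design. -/
def B (v : ℕ) (N : Matrix (Fin v) (Fin v) ℚ) :
    Fin 4 → Matrix (Fin v ⊕ Fin v) (Fin v ⊕ Fin v) ℚ :=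
  ![1,
    Matrix.fromBlocks (Jv v - 1) 0 0 (Jv v - 1),
    Matrix.fromBlocks 0 N Nᵀ 0,
    Matrix.fromBlocks 0 (Jv v - N) (Jv v - Nᵀ) 0]

section Integrality

variable {ι m n R : Type*} [Fintype ι] [Ring R] [PartialOrder R] [IsOrderedRing R]
  {E : ι → Matrix m n R}

theorem sum_smul_apply_of_apply_eq_one (h01 : ∀ h x y, E h x y = 0 ∨ E h x y = 1)
    (hsum : ∑ h, E h = of fun _ _ => 1) (c : ι → R) {h : ι} {x : m} {y : n}
    (hxy : E h x y = 1) : (∑ h', c h' • E h') x y = c h := by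
  classical
  have hnonneg : ∀ h', 0 ≤ E h' x y := fun h' => by
    rcases h01 h' x y with h0 | h1 <;> simp [*]
  have hrest : ∑ h' ∈ univ.erase h, E h' x y = 0 := by
    have hsum_xy := congrFun (congrFun hsum x) y
    rw [Matrix.sum_apply, ← Finset.add_sum_erase _ _ (mem_univ h), hxy] at hsum_xy
    simpa using hsum_xy
  rw [Matrix.sum_apply, Finset.sum_eq_single h, Matrix.smul_apply, hxy, smul_eq_mul, mul_one]
  · intro h' _ hne
    rw [Matrix.smul_apply, (sum_eq_zero_iff_of_nonneg fun i _ => hnonneg i).1 hrest h'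
      (mem_erase.2 ⟨hne, mem_univ _⟩), smul_zero]
  · simp

theorem exists_int_coeffs_of_int_entries (h01 : ∀ h x y, E h x y = 0 ∨ E h x y = 1)
    (hsum : ∑ h, E h = of fun _ _ => 1) {M : Matrix m n R} {c : ι → R}
    (hM : M = ∑ h, c h • E h) (hZ : ∀ x y, M x y ∈ (Int.castRingHom R).range) :
    ∃ p : ι → ℤ, M = ∑ h, (p h : R) • E h := by
  classical
  let p : ι → ℤ := fun h =>
    if H : ∃ x y, E h x y = 1 then (hZ H.choose H.choose_spec.choose).choose else 0
  refine ⟨p, hM.trans (sum_congr rfl fun h _ => ?_)⟩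
  by_cases H : ∃ x y, E h x y = 1
  · have hp : (p h : R) = c h := by
      simp only [p, dif_pos H]
      rw [← eq_intCast (Int.castRingHom R), (hZ _ _).choose_spec, hM,
        sum_smul_apply_of_apply_eq_one h01 hsum c H.choose_spec.choose_spec]
    rw [hp]
  · have hzero : E h = 0 := by
      ext x y
      push Not at H
      exact (h01 h x y).resolve_right (H x y)
    simp [hzero]

end Integrality

theorem mul_apply_mem {m n o R : Type*} [Fintype n] [Ring R] {S : Subring R}
    {A : Matrix m n R} {A' : Matrix n o R} (hA : ∀ x y, A x y ∈ S) (hA' : ∀ x y, A' x y ∈ S)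
    (x : m) (y : o) : (A * A') x y ∈ S :=
  S.sum_mem fun z _ => S.mul_mem (hA x z) (hA' z y)

section Design

variable {v : ℕ} {N : Matrix (Fin v) (Fin v) ℚ}

def blockForm (v : ℕ) (N : Matrix (Fin v) (Fin v) ℚ) (a b c d : ℚ) :
    Matrix (Fin v ⊕ Fin v) (Fin v ⊕ Fin v) ℚ :=
  fromBlocks (a • 1 + b • Jv v) (c • N + d • Jv v) (c • Nᵀ + d • Jv v) (a • 1 + b • Jv v)

theorem Jv_transpose : (Jv v)ᵀ = Jv v := rfl

theorem Jv_mul_Jv : Jv v * Jv v = (v : ℚ) • Jv v := by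
  ext x y
  simp [Jv, mul_apply]

theorem transpose_mul_Jv {k : ℚ} (hJN : Jv v * N = k • Jv v) : Nᵀ * Jv v = k • Jv v := by
  simpa [transpose_mul, Jv_transpose] using congrArg transpose hJN

theorem Jv_mul_transpose {k : ℚ} (hNJ : N * Jv v = k • Jv v) : Jv v * Nᵀ = k • Jv v := by
  simpa [transpose_mul, Jv_transpose] using congrArg transpose hNJ

theorem blockForm_transpose (a b c d : ℚ) :
    (blockForm v N a b c d)ᵀ = blockForm v N a b c d := by
  simp [blockForm, fromBlocks_transpose, Jv_transpose]

theorem blockForm_mul_blockForm {k lam : ℚ}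
    (hN : N * Nᵀ = (k - lam) • (1 : Matrix (Fin v) (Fin v) ℚ) + lam • Jv v)
    (hN' : Nᵀ * N = (k - lam) • (1 : Matrix (Fin v) (Fin v) ℚ) + lam • Jv v)
    (hNJ : N * Jv v = k • Jv v) (hJN : Jv v * N = k • Jv v) (a b c d a' b' c' d' : ℚ) :
    blockForm v N a b c d * blockForm v N a' b' c' d' =
      blockForm v N (a * a' + (k - lam) * c * c')
        (a * b' + b * a' + v * b * b' + lam * c * c' + k * (c * d' + d * c') + v * d * d')
        (a * c' + c * a')
        (a * d' + d * a' + k * (b * c' + c * b') + v * (b * d' + d * b')) := by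
  simp only [blockForm, fromBlocks_multiply, fromBlocks_inj, add_mul, mul_add, smul_mul_smul,
    one_mul, mul_one, hN, hN', hNJ, hJN, transpose_mul_Jv hJN, Jv_mul_transpose hNJ, Jv_mul_Jv]
  refine ⟨?_, ?_, ?_, ?_⟩ <;> module

theorem blockForm_eq_sum (a b c d : ℚ) :
    blockForm v N a b c d = ∑ h, ![a + b, b, c + d, d] h • B v N h := by
  rw [Fin.sum_univ_four]
  simp only [blockForm, B, Matrix.cons_val, ← fromBlocks_one, fromBlocks_smul, fromBlocks_add,
    fromBlocks_inj]
  refine ⟨?_, ?_, ?_, ?_⟩ <;> module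

theorem B_eq_blockForm (i : Fin 4) : ∃ a b c d, B v N i = blockForm v N a b c d := by
  fin_cases i
  · exact ⟨1, 0, 0, 0, by simp [B, blockForm]⟩
  · exact ⟨-1, 1, 0, 0, by simp [B, blockForm, sub_eq_neg_add]⟩
  · exact ⟨0, 0, 1, 0, by simp [B, blockForm]⟩
  · exact ⟨0, 0, -1, 1, by simp [B, blockForm, sub_eq_neg_add]⟩

theorem B_transpose (i : Fin 4) : (B v N i)ᵀ = B v N i := by
  obtain ⟨a, b, c, d, hi⟩ := B_eq_blockForm (N := N) i
  rw [hi, blockForm_transpose]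

theorem sum_B : ∑ h, B v N h = of fun _ _ => 1 := by
  have hJ : ∑ h, B v N h = blockForm v N 0 1 0 1 := by
    simp [blockForm_eq_sum, Fin.sum_univ_four]
  rw [hJ]
  ext (x | x) (y | y) <;> simp [blockForm, Jv]

theorem B_apply_zero_or_one (h01 : ∀ x y, N x y = 0 ∨ N x y = 1) (i : Fin 4)
    (x y : Fin v ⊕ Fin v) : B v N i x y = 0 ∨ B v N i x y = 1 := by
  fin_cases i <;> rcases x with x | x <;> rcases y with y | y <;>
    simp [B, Jv, one_apply, h01] <;> grind

theorem B_mul_B_mem_span {k lam : ℚ}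
    (hN : N * Nᵀ = (k - lam) • (1 : Matrix (Fin v) (Fin v) ℚ) + lam • Jv v)
    (hN' : Nᵀ * N = (k - lam) • (1 : Matrix (Fin v) (Fin v) ℚ) + lam • Jv v)
    (hNJ : N * Jv v = k • Jv v) (hJN : Jv v * N = k • Jv v) (i j : Fin 4) :
    ∃ c : Fin 4 → ℚ, B v N i * B v N j = ∑ h, c h • B v N h := by
  obtain ⟨a, b, c, d, hi⟩ := B_eq_blockForm (N := N) i
  obtain ⟨a', b', c', d', hj⟩ := B_eq_blockForm (N := N) j
  rw [hi, hj, blockForm_mul_blockForm hN hN' hNJ hJN]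
  exact ⟨_, blockForm_eq_sum _ _ _ _⟩

end Design

/-- The blocks `B₀ = I`, `B₁ = diag(J−I, J−I)`, `B₂ = antidiag(N, Nᵀ)`,
`B₃ = antidiag(J−N, J−Nᵀ)` form a symmetric association scheme: they are
symmetric `(0,1)`-matrices summing to `J` with `B₀ = I`, and all pairwise
products lie in their linear span. -/
theorem symmetric_design_three_class_scheme (v : ℕ) (k lam : ℚ)
    (N : Matrix (Fin v) (Fin v) ℚ)
    (h01 : ∀ x y, N x y = 0 ∨ N x y = 1)
    (hN : N * Nᵀ = (k - lam) • (1 : Matrix (Fin v) (Fin v) ℚ) + lam • Jv v)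
    (hN' : Nᵀ * N = (k - lam) • (1 : Matrix (Fin v) (Fin v) ℚ) + lam • Jv v)
    (hNJ : N * Jv v = k • Jv v)
    (hJN : Jv v * N = k • Jv v) :
    B v N 0 = 1 ∧
    (∀ i, (B v N i)ᵀ = B v N i) ∧
    (∀ i x y, B v N i x y = 0 ∨ B v N i x y = 1) ∧
    (∑ i, B v N i = Matrix.of fun _ _ => (1 : ℚ)) ∧
    (∀ i j, ∃ p : Fin 4 → ℤ, B v N i * B v N j = ∑ h, (p h : ℚ) • B v N h) := by
  have hB01 := B_apply_zero_or_one h01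
  have hBint : ∀ i x y, B v N i x y ∈ (Int.castRingHom ℚ).range := fun i x y => by
    rcases hB01 i x y with h | h <;> rw [h]
    exacts [zero_mem _, one_mem _]
  refine ⟨rfl, B_transpose, hB01, sum_B, fun i j => ?_⟩
  obtain ⟨c, hc⟩ := B_mul_B_mem_span hN hN' hNJ hJN i j
  exact exists_int_coeffs_of_int_entries hB01 sum_B hc (mul_apply_mem (hBint i) (hBint j))

end SymDesignScheme
end
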